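/- Let m ≥ 2 and n ≥ 1 be integers, let W = (1/m)·A with A as below, and let S_{m,n} = ∑_{(a,b)} lcp(a,b), the sum over all ordered pairs (a,b) of lists over Fin m of length at most n of the length of the longest common prefix of a and b. Then (∑_{k=0}^∞ k²·(W^k)_{n,0}) − (∑_{k=0}^∞ k·(W^k)_{n,0})² = (m − 1)·S_{m,n}, i.e. the variance of the number of random letters drawn from an m-letter alphabet until n consecutive occurrences of a fixed letter appear equals (m−1) times the sum of common sub-path lengths over all ordered pairs of nodes of the complete m-ary rooted tree of height n. -/

import Mathlib

/-- The longest common prefix of two lists. -/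
def lcp {α : Type*} [DecidableEq α] : List α → List α → List α
  | a :: as, b :: bs => if a = b then a :: lcp as bs else []
  | _, _ => []

/-!
Let `u k` be the probability that no run of `n` copies of the target letter (drawn with
probability `x`) occurs among the first `k` letters. The waiting time `T` for such a run has
`P (T = k + 1) = u k - u (k + 1)`, so summation by parts gives `E T = ∑ u k` and
`E T² = ∑ (2k + 1) u k`. Reading the transfer matrix gives `u k = 1` for `k < n`,
`u n = 1 - xⁿ` and the renewal recurrence `u (k + n + 1) = u (k + n) - (1 - x) xⁿ u k`; summing it,
and `k` times it, over `k` determines `∑ u k` and `∑ k u k`, hence the variance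
`(1 - (2n + 1)(1 - x)xⁿ - x²ⁿ⁺¹) / ((1 - x)² x²ⁿ)`. The same recurrence forces geometric decay
of `u`, which gives all the summability.

On the tree side, splitting off the first letter gives `S (n + 1) = m (S n + N n ²)`, where `N n`
is the number of nodes, so `(m - 1)³ S n = m²ⁿ⁺² - (2n + 1) mⁿ⁺² + (2n + 1) mⁿ⁺¹ - m`, which is
`(m - 1)²` times the variance at `x = 1 / m`.
-/

open Finset

section Tree

variable {α : Type*} [DecidableEq α]

@[simp] lemma lcp_nil_left (b : List α) : lcp [] b = [] := by
  cases b <;> rfl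

@[simp] lemma lcp_nil_right (a : List α) : lcp a [] = [] := by
  cases a <;> rfl

lemma lcp_cons_cons (x y : α) (xs ys : List α) :
    lcp (x :: xs) (y :: ys) = if x = y then x :: lcp xs ys else [] := rfl

variable [Fintype α]

variable (α) in
def listsOfLengthLE : ℕ → Finset (List α)
  | 0 => {[]}
  | n + 1 => insert [] ((univ ×ˢ listsOfLengthLE n).image fun p => p.1 :: p.2)

lemma mem_listsOfLengthLE {n : ℕ} {l : List α} : l ∈ listsOfLengthLE α n ↔ l.length ≤ n := by
  induction n generalizing l with
  | zero => simp [listsOfLengthLE]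
  | succ n ih => cases l <;> simp [listsOfLengthLE, ih]

lemma sum_listsOfLengthLE_succ {M : Type*} [AddCommMonoid M] (n : ℕ) (f : List α → M) :
    ∑ l ∈ listsOfLengthLE α (n + 1), f l = f [] + ∑ x, ∑ l ∈ listsOfLengthLE α n, f (x :: l) := by
  rw [listsOfLengthLE, sum_insert (by simp), sum_image (by simp), sum_product]

lemma card_listsOfLengthLE_succ (n : ℕ) :
    #(listsOfLengthLE α (n + 1)) = 1 + Fintype.card α * #(listsOfLengthLE α n) := by
  rw [card_eq_sum_ones, sum_listsOfLengthLE_succ, card_eq_sum_ones]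
  simp

lemma sum_lcp_length_succ (n : ℕ) :
    ∑ a ∈ listsOfLengthLE α (n + 1), ∑ b ∈ listsOfLengthLE α (n + 1), (lcp a b).length
      = Fintype.card α * (∑ a ∈ listsOfLengthLE α n, ∑ b ∈ listsOfLengthLE α n, (lcp a b).length
          + #(listsOfLengthLE α n) ^ 2) := by
  simp only [sum_listsOfLengthLE_succ, lcp_nil_left, lcp_nil_right, lcp_cons_cons]
  simp [apply_ite List.length, sum_ite_eq, sum_add_distrib, sq]

lemma card_listsOfLengthLE_mul (n : ℕ) :
    (#(listsOfLengthLE α n) : ℝ) * (Fintype.card α - 1) = (Fintype.card α : ℝ) ^ (n + 1) - 1 := by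
  induction n with
  | zero => simp [listsOfLengthLE]
  | succ n ih =>
    rw [card_listsOfLengthLE_succ]
    push_cast
    linear_combination (Fintype.card α : ℝ) * ih

lemma sum_lcp_length_mul (n : ℕ) :
    ((∑ a ∈ listsOfLengthLE α n, ∑ b ∈ listsOfLengthLE α n, (lcp a b).length : ℕ) : ℝ)
        * (Fintype.card α - 1) ^ 3
      = (Fintype.card α : ℝ) ^ (2 * n + 2) - (2 * n + 1) * (Fintype.card α : ℝ) ^ (n + 2)
        + (2 * n + 1) * (Fintype.card α : ℝ) ^ (n + 1) - Fintype.card α := by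
  induction n with
  | zero => simp [listsOfLengthLE]
  | succ n ih =>
    set k : ℝ := (Fintype.card α : ℝ)
    have hN := card_listsOfLengthLE_mul (α := α) n
    rw [sum_lcp_length_succ]
    push_cast at ih hN ⊢
    linear_combination k * ih + k * (k - 1) * ((#(listsOfLengthLE α n) : ℝ) * (k - 1)
      + (k ^ (n + 1) - 1)) * hN

end Tree

theorem summable_pow_mul_of_add_le_mul {u : ℕ → ℝ} {d : ℕ} {r : ℝ} (hu : ∀ k, 0 ≤ u k)
    (hd : 0 < d) (hr0 : 0 < r) (hr1 : r < 1) (hdecay : ∀ k, u (k + d) ≤ r * u k) (j : ℕ) :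
    Summable fun k : ℕ => (k : ℝ) ^ j * u k := by
  set C := ∑ i ∈ range d, u i
  have hgeo : ∀ k, u k ≤ C * r ^ (k / d) := by
    intro k
    induction k using Nat.strong_induction_on with
    | _ k ih =>
      rcases lt_or_ge k d with hk | hk
      · rw [Nat.div_eq_of_lt hk, pow_zero, mul_one]
        exact single_le_sum (fun i _ => hu i) (mem_range.2 hk)
      · obtain ⟨k, rfl⟩ := Nat.exists_eq_add_of_le' hk
        rw [Nat.add_div_right k hd, pow_succ]
        calc u (k + d) ≤ r * u k := hdecay k
          _ ≤ r * (C * r ^ (k / d)) := by gcongr; exact ih k (by omega)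
          _ = C * (r ^ (k / d) * r) := by ring
  -- a `d`-th root of `r` turns the bound `r ^ (k / d)` into a geometric one
  set ρ := r ^ ((d : ℝ)⁻¹)
  have hρ0 : 0 < ρ := Real.rpow_pos_of_pos hr0 _
  have hρ1 : ρ < 1 := Real.rpow_lt_one hr0.le hr1 (by positivity)
  have hρd : ρ ^ d = r := Real.rpow_inv_natCast_pow hr0.le hd.ne'
  have hbound : ∀ k : ℕ, (k : ℝ) ^ j * u k ≤ C / ρ ^ (d - 1) * ((k : ℝ) ^ j * ρ ^ k) := by
    intro k
    have hk : ρ ^ (d * (k / d)) * ρ ^ (d - 1) ≤ ρ ^ k := by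
      have hmod := Nat.mod_lt k hd
      have hdiv := Nat.div_add_mod k d
      rw [← pow_add]
      exact pow_le_pow_of_le_one hρ0.le hρ1.le (by omega)
    have hC : 0 ≤ C := sum_nonneg fun i _ => hu i
    calc (k : ℝ) ^ j * u k ≤ (k : ℝ) ^ j * (C * ρ ^ (d * (k / d))) := by
          rw [pow_mul, hρd]; gcongr; exact hgeo k
      _ ≤ (k : ℝ) ^ j * (C * (ρ ^ k / ρ ^ (d - 1))) := by
          gcongr; rwa [le_div_iff₀ (by positivity)]
      _ = C / ρ ^ (d - 1) * ((k : ℝ) ^ j * ρ ^ k) := by ring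
  have hgeom : Summable fun k : ℕ => (k : ℝ) ^ j * ρ ^ k :=
    summable_pow_mul_geometric_of_norm_lt_one j (by rwa [Real.norm_of_nonneg hρ0.le])
  exact Summable.of_nonneg_of_le (fun k => mul_nonneg (by positivity) (hu k)) hbound
    (hgeom.mul_left _)

section Moments

variable {u p : ℕ → ℝ}

theorem tsum_mul_eq_tsum_sub_mul_of_sub_succ (f : ℕ → ℝ) (hf0 : f 0 = 0)
    (hp : ∀ k, p (k + 1) = u k - u (k + 1)) (hfu : Summable fun k => f k * u k)
    (hdu : Summable fun k => (f (k + 1) - f k) * u k) :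
    ∑' k, f k * p k = ∑' k, (f (k + 1) - f k) * u k := by
  have hshift : Summable fun k => f (k + 1) * u (k + 1) :=
    (summable_nat_add_iff (f := fun k => f k * u k) 1).2 hfu
  have hterm : ∀ k, f (k + 1) * p (k + 1)
      = (f k * u k - f (k + 1) * u (k + 1)) + (f (k + 1) - f k) * u k := fun k => by
    rw [hp]; ring
  have hsum : Summable fun k => f (k + 1) * p (k + 1) :=
    ((hfu.sub hshift).add hdu).congr fun k => (hterm k).symm
  rw [((summable_nat_add_iff (f := fun k => f k * p k) 1).1 hsum).tsum_eq_zero_add,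
    tsum_congr hterm, (hfu.sub hshift).tsum_add hdu, hfu.tsum_sub hshift, hfu.tsum_eq_zero_add, hf0]
  ring

variable {n : ℕ} {a : ℝ}

theorem mul_tsum_eq_of_recurrence (hrec : ∀ k, u (k + n + 1) = u (k + n) - a * u k)
    (h0 : Summable u) : a * ∑' k : ℕ, u k = u n := by
  have hw : Summable fun k => u (k + n) := (summable_nat_add_iff (f := u) n).2 h0
  have := hw.tsum_eq_zero_add
  simp only [add_right_comm _ 1 n, zero_add] at this
  rw [tsum_congr hrec, hw.tsum_sub (h0.mul_left a), tsum_mul_left] at this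
  linarith

theorem mul_tsum_mul_eq_of_recurrence (hinit : ∀ k < n, u k = 1)
    (hrec : ∀ k, u (k + n + 1) = u (k + n) - a * u k) (h0 : Summable u)
    (h1 : Summable fun k : ℕ => (k : ℝ) * u k) :
    a * ∑' k : ℕ, (k : ℝ) * u k = ∑' k : ℕ, u k - n - u n := by
  have hU := mul_tsum_eq_of_recurrence hrec h0
  have hw : Summable fun k => u (k + n) := (summable_nat_add_iff (f := u) n).2 h0
  have hwU : ∑' k, u (k + n) = ∑' k : ℕ, u k - n := by
    rw [← h0.sum_add_tsum_nat_add n, sum_congr rfl fun k hk => hinit k (mem_range.1 hk)]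
    simp
  set t : ℕ → ℝ := fun k => ((k + n : ℕ) : ℝ) * u (k + n)
  have ht : Summable t := (summable_nat_add_iff (f := fun k : ℕ => (k : ℝ) * u k) n).2 h1
  have hstep : ∀ k, t (k + 1) = t k + u (k + n) - a * ((k : ℝ) * u k + (n + 1) * u k) := by
    intro k
    simp only [t, show k + 1 + n = k + n + 1 by omega, hrec]
    push_cast
    ring
  have := ht.tsum_eq_zero_add
  rw [tsum_congr hstep, (ht.add hw).tsum_sub ((h1.add (h0.mul_left _)).mul_left a), ht.tsum_add hw,
    tsum_mul_left, h1.tsum_add (h0.mul_left _), tsum_mul_left, hwU] at this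
  simp only [t, zero_add] at this
  linear_combination this - (n + 1) * hU

theorem variance_eq_of_recurrence (hu : ∀ k, 0 ≤ u k) (hanti : Antitone u)
    (hinit : ∀ k < n, u k = 1) (hrec : ∀ k, u (k + n + 1) = u (k + n) - a * u k)
    (ha0 : 0 < a) (ha1 : a < 1) (hp : ∀ k, p (k + 1) = u k - u (k + 1)) :
    ∑' k : ℕ, (k : ℝ) ^ 2 * p k - (∑' k : ℕ, (k : ℝ) * p k) ^ 2
      = 2 * (u n / a - n - u n) / a + u n / a - (u n / a) ^ 2 := by
  have hdecay : ∀ k, u (k + (n + 1)) ≤ (1 - a) * u k := fun k => by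
    rw [← add_assoc, hrec]; nlinarith [hanti (Nat.le_add_right k n)]
  have hsum := summable_pow_mul_of_add_le_mul hu n.succ_pos (by linarith) (by linarith) hdecay
  have h0 : Summable u := by simpa using hsum 0
  have h1 : Summable fun k : ℕ => (k : ℝ) * u k := by simpa using hsum 1
  have hU : ∑' k : ℕ, u k = u n / a := by
    rw [eq_div_iff ha0.ne', mul_comm, mul_tsum_eq_of_recurrence hrec h0]
  have hV : ∑' k : ℕ, (k : ℝ) * u k = (u n / a - n - u n) / a := by
    rw [eq_div_iff ha0.ne', mul_comm, mul_tsum_mul_eq_of_recurrence hinit hrec h0 h1, hU]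
  have hE1 : ∑' k : ℕ, (k : ℝ) * p k = ∑' k : ℕ, u k := by
    rw [tsum_mul_eq_tsum_sub_mul_of_sub_succ _ (by simp) hp h1 (by simpa using h0)]
    simp
  have hE2 : ∑' k : ℕ, (k : ℝ) ^ 2 * p k = 2 * ∑' k : ℕ, (k : ℝ) * u k + ∑' k : ℕ, u k := by
    have h2 : Summable fun k => (((k + 1 : ℕ) : ℝ) ^ 2 - (k : ℝ) ^ 2) * u k :=
      ((h1.mul_left 2).add h0).congr fun k => by push_cast; ring
    rw [tsum_mul_eq_tsum_sub_mul_of_sub_succ _ (by simp) hp (hsum 2) h2,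
      ← tsum_mul_left, ← (h1.mul_left 2).tsum_add h0]
    exact tsum_congr fun k => by push_cast; ring
  rw [hE2, hE1, hU, hV]
  ring

end Moments

/-- The states are the lengths `0, …, n` of the current run of the target letter, which is drawn
with probability `x`; mass reaching state `n` is removed at the next step. So
`(runMatrix n x ^ k) i 0` is the probability that after `k` letters the current run has length `i`
and no run of length `n` was completed before. -/
def runMatrix (n : ℕ) (x : ℝ) : Matrix (Fin (n + 1)) (Fin (n + 1)) ℝ :=
  Matrix.of fun i j =>
    if (i : ℕ) = 0 then (if (j : ℕ) < n then 1 - x else 0) else (if (j : ℕ) + 1 = i then x else 0)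

def runSurvival (n : ℕ) (x : ℝ) (k : ℕ) : ℝ :=
  ∑ i : Fin n, (runMatrix n x ^ k) i.castSucc 0

section RunMatrix

variable {n : ℕ} {x : ℝ}

lemma runMatrix_apply_zero (j : Fin (n + 1)) :
    runMatrix n x 0 j = if (j : ℕ) < n then 1 - x else 0 := rfl

lemma runMatrix_apply_succ (i : Fin n) (j : Fin (n + 1)) :
    runMatrix n x i.succ j = if j = i.castSucc then x else 0 := by
  simp only [runMatrix, Matrix.of_apply, Fin.val_succ, Nat.add_one_ne_zero, if_false,
    Nat.add_right_cancel_iff, Fin.ext_iff, Fin.val_castSucc]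

lemma runMatrix_pow_succ_apply_zero (k : ℕ) (j : Fin (n + 1)) :
    (runMatrix n x ^ (k + 1)) 0 j = (1 - x) * ∑ i : Fin n, (runMatrix n x ^ k) i.castSucc j := by
  rw [pow_succ', Matrix.mul_apply, Fin.sum_univ_castSucc, mul_sum]
  simp [runMatrix_apply_zero]

lemma runMatrix_pow_succ_apply_succ (k : ℕ) (i : Fin n) (j : Fin (n + 1)) :
    (runMatrix n x ^ (k + 1)) i.succ j = x * (runMatrix n x ^ k) i.castSucc j := by
  rw [pow_succ', Matrix.mul_apply]
  simp [runMatrix_apply_succ]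

lemma runMatrix_pow_apply_nonneg (hx0 : 0 ≤ x) (hx1 : x ≤ 1) (k : ℕ) (i j : Fin (n + 1)) :
    0 ≤ (runMatrix n x ^ k) i j := by
  induction k generalizing i with
  | zero => rw [pow_zero, Matrix.one_apply]; split_ifs <;> norm_num
  | succ k ih =>
    cases i using Fin.cases with
    | zero =>
      rw [runMatrix_pow_succ_apply_zero]
      exact mul_nonneg (by linarith) (sum_nonneg fun i _ => ih _)
    | succ i => rw [runMatrix_pow_succ_apply_succ]; exact mul_nonneg hx0 (ih _)

lemma runMatrix_pow_apply_eq_zero_of_lt {k : ℕ} {i : Fin (n + 1)} (hk : k < i) :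
    (runMatrix n x ^ k) i 0 = 0 := by
  induction k generalizing i with
  | zero =>
    rw [pow_zero, Matrix.one_apply_ne]
    exact Fin.pos_iff_ne_zero.1 hk
  | succ k ih =>
    cases i using Fin.cases with
    | zero => simp at hk
    | succ i =>
      rw [runMatrix_pow_succ_apply_succ, ih (by simpa using hk), mul_zero]

lemma runMatrix_pow_add_apply {j : ℕ} (hj : j < n + 1) (k : ℕ) :
    (runMatrix n x ^ (k + j)) ⟨j, hj⟩ 0 = x ^ j * (runMatrix n x ^ k) 0 0 := by
  induction j with
  | zero => simp
  | succ j ih =>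
    rw [← add_assoc, show (⟨j + 1, hj⟩ : Fin (n + 1)) = Fin.succ ⟨j, by omega⟩ from rfl,
      runMatrix_pow_succ_apply_succ]
    rw [Fin.castSucc_mk, ih (by omega), pow_succ]
    ring

lemma runMatrix_pow_succ_apply_last (k : ℕ) :
    (runMatrix n x ^ (k + 1)) (Fin.last n) 0 = runSurvival n x k - runSurvival n x (k + 1) := by
  have hmass := Fin.sum_univ_succ (fun i => (runMatrix n x ^ (k + 1)) i 0)
  rw [Fin.sum_univ_castSucc] at hmass
  simp only [runMatrix_pow_succ_apply_zero, runMatrix_pow_succ_apply_succ, ← mul_sum] at hmass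
  rw [runSurvival, runSurvival]
  linarith

lemma runSurvival_eq_one_of_lt {k : ℕ} (hk : k < n) : runSurvival n x k = 1 := by
  induction k with
  | zero =>
    obtain ⟨n, rfl⟩ := Nat.exists_eq_add_of_lt hk
    simp [runSurvival, Matrix.one_apply]
  | succ k ih =>
    have hlast := runMatrix_pow_succ_apply_last (n := n) (x := x) k
    rw [runMatrix_pow_apply_eq_zero_of_lt (by simpa using hk), ih (by omega)] at hlast
    linarith

lemma runSurvival_self : runSurvival n x n = 1 - x ^ n := by
  cases n with
  | zero => simp [runSurvival]
  | succ n =>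
    have hlast := runMatrix_pow_succ_apply_last (n := n + 1) (x := x) n
    have hhit := runMatrix_pow_add_apply (x := x) (Nat.lt_succ_self (n + 1)) 0
    rw [zero_add, pow_zero, Matrix.one_apply_eq, mul_one] at hhit
    rw [Fin.last, hhit, runSurvival_eq_one_of_lt (by omega)] at hlast
    linarith

lemma runSurvival_add_succ (k : ℕ) :
    runSurvival n x (k + n + 1)
      = runSurvival n x (k + n) - (1 - x) * x ^ n * runSurvival n x k := by
  have hlast := runMatrix_pow_succ_apply_last (n := n) (x := x) (k + n)
  rw [add_right_comm, Fin.last, runMatrix_pow_add_apply, runMatrix_pow_succ_apply_zero,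
    ← runSurvival, add_right_comm k 1 n] at hlast
  linear_combination hlast

lemma runSurvival_nonneg (hx0 : 0 ≤ x) (hx1 : x ≤ 1) (k : ℕ) : 0 ≤ runSurvival n x k :=
  sum_nonneg fun _ _ => runMatrix_pow_apply_nonneg hx0 hx1 k _ _

lemma runSurvival_antitone (hx0 : 0 ≤ x) (hx1 : x ≤ 1) : Antitone (runSurvival n x) :=
  antitone_nat_of_succ_le fun k => by
    have := runMatrix_pow_succ_apply_last (n := n) (x := x) k
    linarith [runMatrix_pow_apply_nonneg hx0 hx1 (k + 1) (Fin.last n) 0]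

end RunMatrix

theorem variance_runMatrix (n : ℕ) {x : ℝ} (hx0 : 0 < x) (hx1 : x < 1) :
    ∑' k : ℕ, (k : ℝ) ^ 2 * (runMatrix n x ^ k) (Fin.last n) 0
      - (∑' k : ℕ, (k : ℝ) * (runMatrix n x ^ k) (Fin.last n) 0) ^ 2
      = (1 - (2 * n + 1) * (1 - x) * x ^ n - x ^ (2 * n + 1)) / ((1 - x) ^ 2 * x ^ (2 * n)) := by
  have ha0 : 0 < (1 - x) * x ^ n := mul_pos (by linarith) (pow_pos hx0 n)
  have ha1 : (1 - x) * x ^ n < 1 := by nlinarith [pow_le_one₀ hx0.le hx1.le (n := n)]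
  rw [variance_eq_of_recurrence (p := fun k => (runMatrix n x ^ k) (Fin.last n) 0)
    (runSurvival_nonneg hx0.le hx1.le) (runSurvival_antitone hx0.le hx1.le)
    (fun k hk => runSurvival_eq_one_of_lt hk) runSurvival_add_succ ha0 ha1
    runMatrix_pow_succ_apply_last, runSurvival_self]
  have : 1 - x ≠ 0 := by linarith
  field_simp
  ring

theorem stmt_5_general (m n : ℕ) (hm : 2 ≤ m)
    (A W : Matrix (Fin (n + 1)) (Fin (n + 1)) ℝ)
    (hA : ∀ i j : Fin (n + 1), A i j =
      if (i : ℕ) = 0 then (if (j : ℕ) < n then (m : ℝ) - 1 else 0)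
      else (if (j : ℕ) + 1 = (i : ℕ) then 1 else 0))
    (hW : W = (1 / (m : ℝ)) • A)
    (L : Finset (List (Fin m))) (hL : ∀ l : List (Fin m), l ∈ L ↔ l.length ≤ n)
    (S : ℕ) (hS : S = ∑ a ∈ L, ∑ b ∈ L, (lcp a b).length) :
    (∑' k : ℕ, (k : ℝ) ^ 2 * (W ^ k) (Fin.last n) 0)
      - (∑' k : ℕ, (k : ℝ) * (W ^ k) (Fin.last n) 0) ^ 2
      = ((m : ℝ) - 1) * (S : ℝ) := by
  have hm1 : (1 : ℝ) < m := by exact_mod_cast hm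
  have hW' : W = runMatrix n (1 / m) := by
    ext i j
    rw [hW, Matrix.smul_apply, smul_eq_mul, hA, runMatrix, Matrix.of_apply]
    split_ifs <;> field_simp <;> ring
  have hL' : L = listsOfLengthLE (Fin m) n := Finset.ext fun l => by rw [hL, mem_listsOfLengthLE]
  have hS' := sum_lcp_length_mul (α := Fin m) n
  rw [← hL', ← hS, Fintype.card_fin] at hS'
  rw [hW', variance_runMatrix n (by positivity) ((div_lt_one (by linarith)).2 hm1)]
  have : (m : ℝ) - 1 ≠ 0 := by linarith
  simp only [one_div, inv_pow, pow_add, pow_mul'] at hS' ⊢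
  field_simp
  linear_combination -hS'

/-- For integers `m ≥ 2`, `n ≥ 1`, with `W = (1/m)·A` the transfer matrix of the
string-generation process, the variance `∑ₖ k²·(Wᵏ)_{n,0} − (∑ₖ k·(Wᵏ)_{n,0})²` equals
`(m − 1)` times `S_{m,n}`, the sum over all ordered pairs `(a, b)` of lists over `Fin m` of
length at most `n` (the nodes of the complete `m`-ary rooted tree of height `n`) of the length
of the longest common prefix of `a` and `b`. -/
theorem stmt_5 (m n : ℕ) (hm : 2 ≤ m) (hn : 1 ≤ n)
    (A W : Matrix (Fin (n + 1)) (Fin (n + 1)) ℝ)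
    (hA : ∀ i j : Fin (n + 1), A i j =
      if (i : ℕ) = 0 then (if (j : ℕ) < n then (m : ℝ) - 1 else 0)
      else (if (j : ℕ) + 1 = (i : ℕ) then 1 else 0))
    (hW : W = (1 / (m : ℝ)) • A)
    (L : Finset (List (Fin m))) (hL : ∀ l : List (Fin m), l ∈ L ↔ l.length ≤ n)
    (S : ℕ) (hS : S = ∑ a ∈ L, ∑ b ∈ L, (lcp a b).length) :
    (∑' k : ℕ, (k : ℝ) ^ 2 * (W ^ k) (Fin.last n) 0)
      - (∑' k : ℕ, (k : ℝ) * (W ^ k) (Fin.last n) 0) ^ 2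
      = ((m : ℝ) - 1) * (S : ℝ) :=
  stmt_5_general m n hm A W hA hW L hL S hS
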